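/- Let Q : ℝ³ → ℝ⁴ be the map Q(r,θ,φ) = (Cκ₁(r), Sκ₁(r)Cκ₂(θ), Sκ₁(r)Sκ₂(θ)cos φ, Sκ₁(r)Sκ₂(θ)sin φ). Then: (i) Q lands on the quadric Σ, i.e. x₀² + κ₁x₁² + κ₁κ₂x₂² + κ₁κ₂x₃² = 1 where (x₀,x₁,x₂,x₃) = Q(r,θ,φ), for all (r,θ,φ) ∈ ℝ³; and (ii) if κ₁ ≠ 0, the pullback by Q of the ambient quadratic form (1/κ₁)(dx₀² + κ₁dx₁² + κ₁κ₂dx₂² + κ₁κ₂dx₃²) is the metric of the space ${\mathbb S}^3_{[κ₁]κ₂}$ in geodesic polar coordinates: for every point (r,θ,φ) and every pair of tangent vectors u = (u_r,u_θ,u_φ), v = (v_r,v_θ,v_φ) ∈ ℝ³, writing DQ for the total derivative of Q, one has (1/κ₁)(DQ(u)₀DQ(v)₀ + κ₁DQ(u)₁DQ(v)₁ + κ₁κ₂DQ(u)₂DQ(v)₂ + κ₁κ₂DQ(u)₃DQ(v)₃) = u_r v_r + κ₂Sκ₁(r)²(u_θ v_θ + Sκ₂(θ)² u_φ v_φ).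 -/

import Mathlib

/-! Writing κ as s², -s² or 0 identifies (Cκ, Sκ) with (cos (s·), sin (s·)/s), with
(cosh (s·), sinh (s·)/s), or with (1, id); in every case Cκ' = -κ Sκ and Sκ' = Cκ. Hence
Cκ² + κ Sκ² has zero derivative and equals its value 1 at the origin. Part (i) is this identity
applied to κ₁, κ₂ and to cos, sin in turn; part (ii) is the same three identities applied to the
explicit Jacobian of Q. -/

namespace Paper
noncomputable section

/-- The κ-dependent cosine Cκ(x) = ∑ (−κ)^l x^{2l}/(2l)!. -/
def Ck (κ x : ℝ) : ℝ := ∑' l : ℕ, (-κ) ^ l * x ^ (2 * l) / (Nat.factorial (2 * l) : ℝ)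

/-- The κ-dependent sine Sκ(x) = ∑ (−κ)^l x^{2l+1}/(2l+1)!. -/
def Sk (κ x : ℝ) : ℝ := ∑' l : ℕ, (-κ) ^ l * x ^ (2 * l + 1) / (Nat.factorial (2 * l + 1) : ℝ)

/-- The parametrization Q(r,θ,φ) of the space 𝕊³_{[κ₁]κ₂} in geodesic polar
coordinates, with (r,θ,φ) = (y 0, y 1, y 2) and ambient coordinates
(x₀,x₁,x₂,x₃) indexed by Fin 4. -/
def Qmap (κ₁ κ₂ : ℝ) (y : Fin 3 → ℝ) : Fin 4 → ℝ :=
  ![Ck κ₁ (y 0),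
    Sk κ₁ (y 0) * Ck κ₂ (y 1),
    Sk κ₁ (y 0) * Sk κ₂ (y 1) * Real.cos (y 2),
    Sk κ₁ (y 0) * Sk κ₂ (y 1) * Real.sin (y 2)]

open Real

lemma Ck_zero_right (κ : ℝ) : Ck κ 0 = 1 := by
  rw [Ck, tsum_eq_single 0 fun l hl => by simp [hl]]
  simp

lemma Sk_zero_right (κ : ℝ) : Sk κ 0 = 0 := by
  simp [Sk]

lemma Ck_zero_left : Ck 0 = fun _ => 1 := by
  funext x
  rw [Ck, tsum_eq_single 0 fun l hl => by simp [hl]]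
  simp

lemma Sk_zero_left : Sk 0 = id := by
  funext x
  rw [Sk, tsum_eq_single 0 fun l hl => by simp [hl]]
  simp

lemma Ck_sq_eq_cos (s : ℝ) : Ck (s ^ 2) = fun x => cos (s * x) := by
  funext x
  rw [Ck, cos_eq_tsum]
  congr! 2 with l
  ring

lemma Sk_sq_eq_sin_div {s : ℝ} (hs : s ≠ 0) : Sk (s ^ 2) = fun x => sin (s * x) / s := by
  funext x
  rw [Sk, ← ((hasSum_sin (s * x)).div_const s).tsum_eq]
  refine tsum_congr fun l => ?_
  field_simp
  ring

lemma Ck_neg_sq_eq_cosh (s : ℝ) : Ck (-s ^ 2) = fun x => cosh (s * x) := by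
  funext x
  rw [Ck, cosh_eq_tsum]
  congr! 2 with l
  ring

lemma Sk_neg_sq_eq_sinh_div {s : ℝ} (hs : s ≠ 0) : Sk (-s ^ 2) = fun x => sinh (s * x) / s := by
  funext x
  rw [Sk, ← ((hasSum_sinh (s * x)).div_const s).tsum_eq]
  refine tsum_congr fun l => ?_
  field_simp
  ring

lemma eq_zero_or_exists_eq_sq_or_eq_neg_sq (κ : ℝ) :
    κ = 0 ∨ ∃ s ≠ 0, κ = s ^ 2 ∨ κ = -s ^ 2 := by
  rcases lt_trichotomy κ 0 with hκ | hκ | hκ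
  · refine Or.inr ⟨√(-κ), (sqrt_pos.2 (neg_pos.2 hκ)).ne', Or.inr ?_⟩
    rw [sq_sqrt (neg_nonneg.2 hκ.le), neg_neg]
  · exact Or.inl hκ
  · exact Or.inr ⟨√κ, (sqrt_pos.2 hκ).ne', Or.inl (sq_sqrt hκ.le).symm⟩

lemma hasDerivAt_Sk (κ x : ℝ) : HasDerivAt (Sk κ) (Ck κ x) x := by
  obtain rfl | ⟨s, hs, rfl | rfl⟩ := eq_zero_or_exists_eq_sq_or_eq_neg_sq κ
  · rw [Sk_zero_left, Ck_zero_left]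
    exact hasDerivAt_id x
  · rw [Sk_sq_eq_sin_div hs, Ck_sq_eq_cos]
    exact ((hasDerivAt_const_mul s).sin.div_const s).congr_deriv (by dsimp only; field_simp)
  · rw [Sk_neg_sq_eq_sinh_div hs, Ck_neg_sq_eq_cosh]
    exact ((hasDerivAt_const_mul s).sinh.div_const s).congr_deriv (by dsimp only; field_simp)

lemma hasDerivAt_Ck (κ x : ℝ) : HasDerivAt (Ck κ) (-κ * Sk κ x) x := by
  obtain rfl | ⟨s, hs, rfl | rfl⟩ := eq_zero_or_exists_eq_sq_or_eq_neg_sq κ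
  · rw [Ck_zero_left]
    simpa using hasDerivAt_const x (1 : ℝ)
  · rw [Sk_sq_eq_sin_div hs, Ck_sq_eq_cos]
    exact (hasDerivAt_const_mul s).cos.congr_deriv (by dsimp only; field_simp)
  · rw [Sk_neg_sq_eq_sinh_div hs, Ck_neg_sq_eq_cosh]
    exact (hasDerivAt_const_mul s).cosh.congr_deriv (by dsimp only; field_simp)

lemma Ck_sq_add_mul_Sk_sq (κ x : ℝ) : Ck κ x ^ 2 + κ * Sk κ x ^ 2 = 1 := by
  have hderiv (t : ℝ) : HasDerivAt (fun t => Ck κ t ^ 2 + κ * Sk κ t ^ 2) 0 t := by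
    refine (((hasDerivAt_Ck κ t).fun_pow 2).add
      (((hasDerivAt_Sk κ t).fun_pow 2).const_mul κ)).congr_deriv ?_
    ring
  have hconst := is_const_of_deriv_eq_zero (fun t => (hderiv t).differentiableAt)
    (fun t => (hderiv t).deriv) x 0
  simpa [Ck_zero_right, Sk_zero_right] using hconst

lemma hasFDerivAt_comp_apply {ι : Type*} [Fintype ι] {f : ℝ → ℝ} {f' : ℝ} {y : ι → ℝ} {i : ι}
    (hf : HasDerivAt f f' (y i)) :
    HasFDerivAt (fun y : ι → ℝ => f (y i))
      (f' • ContinuousLinearMap.proj (R := ℝ) (φ := fun _ : ι => ℝ) i) y :=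
  hf.comp_hasFDerivAt y (hasFDerivAt_apply i y)

lemma fderiv_apply_eq_of_hasFDerivAt {E ι : Type*} [NormedAddCommGroup E] [NormedSpace ℝ E]
    [Fintype ι] {Φ : E → ι → ℝ} {y : E} {i : ι} {φ' : E →L[ℝ] ℝ}
    (hΦ : DifferentiableAt ℝ Φ y) (hi : HasFDerivAt (fun x => Φ x i) φ' y) (u : E) :
    fderiv ℝ Φ y u i = φ' u := by
  rw [← hi.fderiv, fderiv_apply hΦ]
  rfl

lemma fderiv_Qmap_apply (κ₁ κ₂ : ℝ) (y u : Fin 3 → ℝ) :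
    fderiv ℝ (Qmap κ₁ κ₂) y u =
      ![-κ₁ * Sk κ₁ (y 0) * u 0,
        Ck κ₁ (y 0) * Ck κ₂ (y 1) * u 0 - κ₂ * Sk κ₁ (y 0) * Sk κ₂ (y 1) * u 1,
        (Ck κ₁ (y 0) * Sk κ₂ (y 1) * u 0 + Sk κ₁ (y 0) * Ck κ₂ (y 1) * u 1) * cos (y 2)
          - Sk κ₁ (y 0) * Sk κ₂ (y 1) * sin (y 2) * u 2,
        (Ck κ₁ (y 0) * Sk κ₂ (y 1) * u 0 + Sk κ₁ (y 0) * Ck κ₂ (y 1) * u 1) * sin (y 2)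
          + Sk κ₁ (y 0) * Sk κ₂ (y 1) * cos (y 2) * u 2] := by
  have hC₁ := hasFDerivAt_comp_apply (i := 0) (hasDerivAt_Ck κ₁ (y 0))
  have hS₁ := hasFDerivAt_comp_apply (i := 0) (hasDerivAt_Sk κ₁ (y 0))
  have hC₂ := hasFDerivAt_comp_apply (i := 1) (hasDerivAt_Ck κ₂ (y 1))
  have hS₂ := hasFDerivAt_comp_apply (i := 1) (hasDerivAt_Sk κ₂ (y 1))
  have hcos := hasFDerivAt_comp_apply (i := 2) (hasDerivAt_cos (y 2))
  have hsin := hasFDerivAt_comp_apply (i := 2) (hasDerivAt_sin (y 2))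
  have hQ₀ : HasFDerivAt (fun x => Qmap κ₁ κ₂ x 0) _ y := hC₁
  have hQ₁ : HasFDerivAt (fun x => Qmap κ₁ κ₂ x 1) _ y := hS₁.fun_mul hC₂
  have hQ₂ : HasFDerivAt (fun x => Qmap κ₁ κ₂ x 2) _ y := (hS₁.fun_mul hS₂).fun_mul hcos
  have hQ₃ : HasFDerivAt (fun x => Qmap κ₁ κ₂ x 3) _ y := (hS₁.fun_mul hS₂).fun_mul hsin
  have hQ : DifferentiableAt ℝ (Qmap κ₁ κ₂) y := differentiableAt_pi.2 fun i => by
    fin_cases i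
    exacts [hQ₀.differentiableAt, hQ₁.differentiableAt, hQ₂.differentiableAt, hQ₃.differentiableAt]
  ext i
  fin_cases i <;>
    simp only [Fin.zero_eta, Fin.mk_one, Fin.reduceFinMk, Fin.isValue, Matrix.cons_val,
      fderiv_apply_eq_of_hasFDerivAt hQ hQ₀, fderiv_apply_eq_of_hasFDerivAt hQ hQ₁,
      fderiv_apply_eq_of_hasFDerivAt hQ hQ₂, fderiv_apply_eq_of_hasFDerivAt hQ hQ₃,
      add_apply, smul_apply, ContinuousLinearMap.proj_apply, smul_eq_mul] <;>
    ring

/-- (i) Q lands on the quadric Σ: x₀² + κ₁x₁² + κ₁κ₂x₂² + κ₁κ₂x₃² = 1;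
(ii) if κ₁ ≠ 0, the pullback by Q of the ambient quadratic form
(1/κ₁)(dx₀² + κ₁dx₁² + κ₁κ₂dx₂² + κ₁κ₂dx₃²) is the geodesic polar metric
dr² + κ₂Sκ₁(r)²(dθ² + Sκ₂(θ)²dφ²). -/
theorem ambient_parametrization_and_metric (κ₁ κ₂ : ℝ) :
    (∀ y : Fin 3 → ℝ,
      Qmap κ₁ κ₂ y 0 ^ 2 + κ₁ * Qmap κ₁ κ₂ y 1 ^ 2
        + κ₁ * κ₂ * Qmap κ₁ κ₂ y 2 ^ 2 + κ₁ * κ₂ * Qmap κ₁ κ₂ y 3 ^ 2 = 1) ∧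
    (κ₁ ≠ 0 → ∀ (y u v : Fin 3 → ℝ),
      (1 / κ₁) *
        (fderiv ℝ (Qmap κ₁ κ₂) y u 0 * fderiv ℝ (Qmap κ₁ κ₂) y v 0
          + κ₁ * (fderiv ℝ (Qmap κ₁ κ₂) y u 1 * fderiv ℝ (Qmap κ₁ κ₂) y v 1)
          + κ₁ * κ₂ * (fderiv ℝ (Qmap κ₁ κ₂) y u 2 * fderiv ℝ (Qmap κ₁ κ₂) y v 2)
          + κ₁ * κ₂ * (fderiv ℝ (Qmap κ₁ κ₂) y u 3 * fderiv ℝ (Qmap κ₁ κ₂) y v 3))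
        = u 0 * v 0 + κ₂ * Sk κ₁ (y 0) ^ 2 * (u 1 * v 1 + Sk κ₂ (y 1) ^ 2 * (u 2 * v 2))) := by
  have h₁ (y : Fin 3 → ℝ) := Ck_sq_add_mul_Sk_sq κ₁ (y 0)
  have h₂ (y : Fin 3 → ℝ) := Ck_sq_add_mul_Sk_sq κ₂ (y 1)
  have h₃ (y : Fin 3 → ℝ) := sin_sq_add_cos_sq (y 2)
  refine ⟨fun y => ?_, fun hκ₁ y u v => ?_⟩
  · simp only [Qmap, Matrix.cons_val]
    linear_combination h₁ y + κ₁ * Sk κ₁ (y 0) ^ 2 * h₂ y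
      + κ₁ * κ₂ * Sk κ₁ (y 0) ^ 2 * Sk κ₂ (y 1) ^ 2 * h₃ y
  · simp only [fderiv_Qmap_apply, Matrix.cons_val]
    rw [one_div, inv_mul_eq_iff_eq_mul₀ hκ₁]
    linear_combination κ₁ * u 0 * v 0 * h₁ y
      + κ₁ * (Ck κ₁ (y 0) ^ 2 * u 0 * v 0 + κ₂ * Sk κ₁ (y 0) ^ 2 * u 1 * v 1) * h₂ y
      + κ₁ * κ₂ * ((Ck κ₁ (y 0) * Sk κ₂ (y 1) * u 0 + Sk κ₁ (y 0) * Ck κ₂ (y 1) * u 1)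
          * (Ck κ₁ (y 0) * Sk κ₂ (y 1) * v 0 + Sk κ₁ (y 0) * Ck κ₂ (y 1) * v 1)
          + Sk κ₁ (y 0) ^ 2 * Sk κ₂ (y 1) ^ 2 * u 2 * v 2) * h₃ y

end
end Paper
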